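/- arXiv:2209.14481 — 3 statements merged into one kernel-verified Lean document; each statement's English description precedes it below -/
import Mathlib

section
/- Let ω : ℝ² → ℝ be integrable and essentially bounded. Then for every x ∈ ℝ² the integral ∫_{ℝ²} K(x−y) ω(y) dy converges absolutely and equals −vec( (i/(2π)) ∫_{ℝ²} ω(y) / conj(⟵(y−x)) dy ), where the complex integral also converges absolutely. -/
open MeasureTheory

/-- Identify `ℂ` with `ℝ²` via `vec (a + b i) = (a, b)`. -/
def vec (z : ℂ) : ℝ × ℝ := (z.re, z.im)

/-- Identify `ℝ²` with `ℂ`: `⟵(x₁, x₂) = x₁ + i x₂`. -/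
noncomputable def toC (x : ℝ × ℝ) : ℂ := x.1 + x.2 * Complex.I

/-- The Biot–Savart kernel `K x = (1/(2π)) x^⊥ / |x|²` on `ℝ² \ {0}` (junk value `0` at `0`). -/
noncomputable def K (x : ℝ × ℝ) : ℝ × ℝ :=
  (2 * Real.pi * (x.1 ^ 2 + x.2 ^ 2))⁻¹ • (-x.2, x.1)

/-!
The Biot–Savart kernel satisfies `|K z| ≤ (2π)⁻¹ |z|⁻¹`, which is integrable near the origin of
`ℝ²` and bounded away from it, so `K(x - ·)` is the sum of an `L¹` and an `L^∞` function and
pairs integrably with any `ω ∈ L¹ ∩ L^∞`. Pointwise, `K z = vec (i / (2π) / conj ⟵z)`, and the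
identity of integrals follows by pulling the continuous linear map `vec` and the constant
`i / (2π)` out of the integral.
-/

open Metric in
lemma MeasureTheory.Integrable.smul_comp_sub_of_integrableOn_ball {G F : Type*} [NormedAddCommGroup G]
    [MeasurableSpace G] [BorelSpace G] [NormedAddCommGroup F] [NormedSpace ℝ F]
    {μ : Measure G} [μ.IsAddLeftInvariant] [μ.IsNegInvariant]
    {ω : G → ℝ} {k : G → F} {C R B : ℝ} (hω : Integrable ω μ) (hω_bdd : ∀ᵐ y ∂μ, |ω y| ≤ C)
    (hk : AEStronglyMeasurable k μ) (hk_ball : IntegrableOn k (ball 0 R) μ)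
    (hk_far : ∀ z, R ≤ ‖z‖ → ‖k z‖ ≤ B) (x : G) :
    Integrable (fun y => ω y • k (x - y)) μ := by
  have hsub := Measure.measurePreserving_sub_left μ x
  have h_near : Integrable (fun y => ω y • (ball 0 R).indicator k (x - y)) μ :=
    ((hsub.integrable_comp_of_integrable (hk_ball.integrable_indicator measurableSet_ball)).bdd_smul
      C hω.aestronglyMeasurable hω_bdd :)
  have h_far : Integrable (fun y => ω y • (ball 0 R)ᶜ.indicator k (x - y)) μ := by
    refine hω.smul_bdd (max B 0)
      ((hk.indicator measurableSet_ball.compl).comp_measurePreserving hsub)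
      (ae_of_all _ fun y => ?_)
    by_cases hy : x - y ∈ ball 0 R
    · simp [hy]
    · rw [Set.indicator_of_mem hy]
      exact (hk_far _ (by simpa using hy)).trans (le_max_left _ _)
  refine (h_near.add h_far).congr (ae_of_all _ fun y => ?_)
  simp only [Pi.add_apply, ← smul_add, Set.indicator_self_add_compl_apply]

open Complex ComplexConjugate

lemma vec_eq_equivRealProdCLM : vec = Complex.equivRealProdCLM := rfl

lemma toC_eq_equivRealProdCLM_symm : toC = Complex.equivRealProdCLM.symm :=
  funext fun z => (Complex.equivRealProdCLM_symm_apply z).symm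

lemma K_eq_vec (z : ℝ × ℝ) : K z = vec (I / (2 * Real.pi) / conj (toC z)) := by
  rcases eq_or_ne z 0 with rfl | hz
  · simp [K, vec, toC]; rfl
  have hd : z.1 ^ 2 + z.2 ^ 2 ≠ 0 := by
    contrapose! hz
    ext <;> simp <;> nlinarith [sq_nonneg z.1, sq_nonneg z.2]
  simp [K, vec, toC, div_re, div_im, normSq_apply]
  constructor <;> field_simp

lemma smul_K_eq (a : ℝ) (z : ℝ × ℝ) :
    a • K z = -vec (I / (2 * Real.pi) * (a / conj (toC (-z)))) := by
  rw [K_eq_vec, toC_eq_equivRealProdCLM_symm, map_neg, map_neg, vec_eq_equivRealProdCLM,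
    ← map_smul, ← map_neg, real_smul]
  congr 1
  ring

lemma measurable_K : Measurable K := by
  unfold K; fun_prop

lemma norm_K_le (z : ℝ × ℝ) : ‖K z‖ ≤ (2 * Real.pi)⁻¹ * ‖z‖⁻¹ := by
  rcases eq_or_ne z 0 with rfl | hz
  · simp [K]
  have hz' : 0 < ‖z‖ := norm_pos_iff.mpr hz
  -- `‖·‖` on `ℝ × ℝ` is the sup norm, dominated by the Euclidean one
  have h_sq : ‖z‖ ^ 2 ≤ z.1 ^ 2 + z.2 ^ 2 := by
    rcases max_cases ‖z.1‖ ‖z.2‖ with ⟨h, _⟩ | ⟨h, _⟩ <;>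
      rw [Prod.norm_def, h, Real.norm_eq_abs, sq_abs] <;> nlinarith
  have h_perp : ‖((-z.2, z.1) : ℝ × ℝ)‖ = ‖z‖ := by
    simp [Prod.norm_def, max_comm]
  rw [K, norm_smul, h_perp, Real.norm_of_nonneg (by positivity), mul_inv, mul_assoc]
  gcongr
  rw [inv_mul_le_iff₀ (by nlinarith), le_mul_inv_iff₀ hz']
  nlinarith

lemma integrableOn_ball_K (R : ℝ) : IntegrableOn K (Metric.ball 0 R) := by
  refine integrableOn_ball_of_norm_le_rpow (α := 1) (C := (2 * Real.pi)⁻¹) (by simp) (by simp)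
    (ae_of_all _ fun z => ?_) measurable_K.aestronglyMeasurable
  rw [Real.rpow_neg_one]
  exact norm_K_le z

lemma norm_K_le_of_one_le_norm {z : ℝ × ℝ} (hz : 1 ≤ ‖z‖) : ‖K z‖ ≤ (2 * Real.pi)⁻¹ :=
  (norm_K_le z).trans (mul_le_of_le_one_right (by positivity) (inv_le_one_of_one_le₀ hz))

/-- For `ω` integrable and essentially bounded, `∫ K(x-y) ω(y) dy` converges absolutely and
equals `-vec((i/(2π)) ∫ ω(y)/conj(⟵(y-x)) dy)`, the latter also converging absolutely. -/
theorem stmt3 (ω : ℝ × ℝ → ℝ) (hint : Integrable ω)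
    (hbdd : ∃ C : ℝ, ∀ᵐ y : ℝ × ℝ ∂volume, |ω y| ≤ C) (x : ℝ × ℝ) :
    Integrable (fun y => ω y • K (x - y)) ∧
    Integrable (fun y => (ω y : ℂ) / (starRingEnd ℂ) (toC (y - x))) ∧
    (∫ y, ω y • K (x - y)) =
      -vec ((Complex.I / (2 * Real.pi)) *
        ∫ y, (ω y : ℂ) / (starRingEnd ℂ) (toC (y - x))) := by
  obtain ⟨C, hC⟩ := hbdd
  have hF : Integrable (fun y => ω y • K (x - y)) :=
    hint.smul_comp_sub_of_integrableOn_ball hC measurable_K.aestronglyMeasurable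
      (integrableOn_ball_K 1) (fun _ => norm_K_le_of_one_le_norm) x
  have hF_eq : (fun y => ω y • K (x - y)) = fun y =>
      -Complex.equivRealProdCLM (I / (2 * Real.pi) * ((ω y : ℂ) / conj (toC (y - x)))) := by
    ext1 y
    rw [smul_K_eq, neg_sub, vec_eq_equivRealProdCLM]
  have hc : IsUnit (I / (2 * Real.pi)) := isUnit_iff_ne_zero.mpr (by simp [Real.pi_ne_zero])
  refine ⟨hF, ?_, ?_⟩
  · rwa [hF_eq, integrable_fun_neg_iff, ContinuousLinearEquiv.integrable_comp_iff,
      integrable_const_mul_iff hc] at hF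
  · rw [hF_eq, integral_neg, ContinuousLinearEquiv.integral_comp_comm, integral_const_mul,
      vec_eq_equivRealProdCLM]
end

section
/- For every complex number z that is not an integer, the symmetric partial sums Σ_{n=−N}^{N} 1/(z+n) converge as N → ∞ to π·cot(π z). -/
open Filter Finset Complex

theorem Finset.sum_Icc_neg_eq_add_sum_range {M : Type*} [AddCommGroup M] (f : ℤ → M) (N : ℕ) :
    ∑ m ∈ Icc (-N : ℤ) N, f m = f 0 + ∑ j ∈ range N, (f (j + 1) + f (-(j + 1))) := by
  induction N with
  | zero => simp
  | succ N ih =>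
    rw [Nat.cast_succ, sum_Icc_succ_eq_add_endpoints, ih, sum_range_succ]
    abel

theorem sum_Icc_one_div_add_intCast_eq_add_sum_cotTerm (z : ℂ) (N : ℕ) :
    ∑ n ∈ Icc (-N : ℤ) N, 1 / (z + n) = 1 / z + ∑ j ∈ range N, cotTerm z j := by
  rw [sum_Icc_neg_eq_add_sum_range]
  push_cast
  simp only [add_zero, cotTerm, ← sub_eq_add_neg, add_comm (1 / (z + _))]

/-- For `z` not an integer, the symmetric partial sums `∑_{n=-N}^{N} 1/(z+n)` converge to
`π cot (π z)` as `N → ∞`. -/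
theorem stmt5 (z : ℂ) (hz : ∀ n : ℤ, z ≠ (n : ℂ)) :
    Filter.Tendsto (fun N : ℕ => ∑ n ∈ Finset.Icc (-(N : ℤ)) (N : ℤ), 1 / (z + (n : ℂ)))
      Filter.atTop (nhds ((Real.pi : ℂ) * Complex.cot (Real.pi * z))) := by
  have hz' : z ∈ integerComplement := fun ⟨n, hn⟩ ↦ hz n hn.symm
  simp_rw [sum_Icc_one_div_add_intCast_eq_add_sum_cotTerm]
  simpa using (tendsto_logDeriv_euler_cot_sub hz').const_add (1 / z)
end

section
/- The map x ↦ K_∞(x) − K(x), defined on ℝ² ∖ L, extends to a function H : ℝ² ∖ L* → ℝ² each of whose two component functions is harmonic on the open set ℝ² ∖ L* (in particular, the singularity of K_∞ − K at the origin is removable). -/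
/-- The singular lattice `L = ℤ × {0} ⊆ ℝ²`. -/
def L : Set (ℝ × ℝ) := {p | ∃ n : ℤ, p = ((n : ℝ), 0)}

/-- `L* = L \ {(0,0)}`. -/
def Lstar : Set (ℝ × ℝ) := L \ {(0, 0)}

/-- The periodic Biot–Savart kernel
`K_∞ x = (-sinh(2πx₂), sin(2πx₁)) / (2(cosh(2πx₂) - cos(2πx₁)))` on `ℝ² \ L`. -/
noncomputable def Kinf (x : ℝ × ℝ) : ℝ × ℝ :=
  (2 * (Real.cosh (2 * Real.pi * x.2) - Real.cos (2 * Real.pi * x.1)))⁻¹ •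
    (-Real.sinh (2 * Real.pi * x.2), Real.sin (2 * Real.pi * x.1))

/-- A real-valued function is harmonic on an open set `U ⊆ ℝ²` if it is `C²` on `U`
and its Laplacian vanishes on `U`. -/
def HarmonicOn (f : ℝ × ℝ → ℝ) (U : Set (ℝ × ℝ)) : Prop :=
  ContDiffOn ℝ 2 f U ∧
  ∀ x ∈ U, fderiv ℝ (fun y => fderiv ℝ f y (1, 0)) x (1, 0) +
    fderiv ℝ (fun y => fderiv ℝ f y (0, 1)) x (0, 1) = 0


/-! Identify `ℝ²` with `ℂ` via `x ↦ z = x₁ + x₂ i`. Writing `c(z) = cot (π z) - (π z)⁻¹`, one has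
`K_∞ - K = (Im c / 2, Re c / 2)`, i.e. `K_∞ - K` is `(i/2) · conj c`. The function `w ↦ cot w - w⁻¹`
has a removable singularity at `0`: it equals `((cos w - sin w / w) / w) / (sin w / w)`, a quotient
of entire functions whose denominator vanishes exactly at the nonzero multiples of `π`. So `c`
extends holomorphically to `ℂ ∖ (ℤ ∖ {0})`, and the real and imaginary parts of a holomorphic
function are harmonic. -/

open Complex InnerProductSpace Laplacian
open scoped Real

theorem HarmonicOn.of_harmonicOnNhd_comp_equivRealProd {g : ℂ → ℝ} {U : Set ℂ}
    (hg : HarmonicOnNhd g U) :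
    HarmonicOn (g ∘ equivRealProdCLM.symm) (equivRealProdCLM.symm ⁻¹' U) := by
  set e : (ℝ × ℝ) ≃L[ℝ] ℂ := equivRealProdCLM.symm
  have second_deriv (x : ℝ × ℝ) (hx : e x ∈ U) (v : ℝ × ℝ) :
      fderiv ℝ (fun y => fderiv ℝ (g ∘ e) y v) x v =
        iteratedFDeriv ℝ 2 g (e x) ![e v, e v] := by
    have hd : DifferentiableAt ℝ (fderiv ℝ g) (e x) :=
      ((hg _ hx).1.fderiv_right le_rfl).differentiableAt one_ne_zero
    simp_rw [e.comp_right_fderiv, ContinuousLinearMap.comp_apply]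
    change fderiv ℝ ((fun w => fderiv ℝ g w (e v)) ∘ e) x v = _
    rw [e.comp_right_fderiv, ContinuousLinearMap.comp_apply,
      fderiv_clm_apply hd (differentiableAt_const _), iteratedFDeriv_two_apply]
    simp
  refine ⟨hg.contDiffOn.comp e.contDiff.contDiffOn (Set.mapsTo_preimage _ _), fun x hx => ?_⟩
  rw [second_deriv x hx, second_deriv x hx]
  have hΔ : Δ g (e x) = 0 := (hg _ hx).2.self_of_nhds
  simpa [e, equivRealProdCLM_symm_apply, laplacian_eq_iteratedFDeriv_complexPlane] using hΔ

theorem Complex.differentiable_dslope {E : Type*} [NormedAddCommGroup E] [NormedSpace ℂ E]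
    [CompleteSpace E] {f : ℂ → E} {c : ℂ} :
    Differentiable ℂ (dslope f c) ↔ Differentiable ℂ f := by
  simp only [← differentiableOn_univ]
  exact differentiableOn_dslope Filter.univ_mem

lemma dslope_sin_zero_of_ne {w : ℂ} (hw : w ≠ 0) : dslope sin 0 w = sin w / w := by
  rw [dslope_of_ne _ hw, slope_def_field, sin_zero, sub_zero, sub_zero]

lemma dslope_sin_zero_eq_zero_iff {w : ℂ} : dslope sin 0 w = 0 ↔ w ≠ 0 ∧ sin w = 0 := by
  rcases eq_or_ne w 0 with rfl | hw
  · simp [dslope_same]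
  · simp [dslope_sin_zero_of_ne hw, hw]

lemma isOpen_dslope_sin_ne_zero : IsOpen {w | dslope sin 0 w ≠ 0} :=
  isOpen_ne_fun (differentiable_dslope.mpr differentiable_sin).continuous continuous_const

noncomputable def cotSubInv (w : ℂ) : ℂ :=
  dslope (fun w => cos w - dslope sin 0 w) 0 w / dslope sin 0 w

lemma cotSubInv_eq {w : ℂ} (hw : sin w ≠ 0) : cotSubInv w = cot w - w⁻¹ := by
  have hw0 : w ≠ 0 := by rintro rfl; simp at hw
  rw [cotSubInv, dslope_of_ne _ hw0, slope_def_field, dslope_sin_zero_of_ne hw0, dslope_same,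
    Complex.deriv_sin, cos_zero, cot_eq_cos_div_sin]
  field_simp
  ring

lemma differentiableOn_cotSubInv :
    DifferentiableOn ℂ cotSubInv {w | dslope sin 0 w ≠ 0} := by
  have hsinc : Differentiable ℂ (dslope sin 0) := differentiable_dslope.mpr differentiable_sin
  exact (differentiable_dslope.mpr (differentiable_cos.sub hsinc)).differentiableOn.div
    hsinc.differentiableOn fun _ hw => hw

lemma sin_add_mul_I_ofReal (a b : ℝ) :
    sin (a + b * I) = (Real.sin a * Real.cosh b : ℝ) + (Real.cos a * Real.sinh b : ℝ) * I := by
  rw [sin_add_mul_I]; push_cast; ring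

lemma cos_add_mul_I_ofReal (a b : ℝ) :
    cos (a + b * I) = (Real.cos a * Real.cosh b : ℝ) - (Real.sin a * Real.sinh b : ℝ) * I := by
  rw [cos_add_mul_I]; push_cast; ring

lemma normSq_sin_add_mul_I (a b : ℝ) :
    normSq (sin (a + b * I)) = (Real.cosh (2 * b) - Real.cos (2 * a)) / 2 := by
  rw [sin_add_mul_I_ofReal, normSq_add_mul_I, Real.cosh_two_mul, Real.cos_two_mul']
  linear_combination (Real.sinh b ^ 2 + 1 / 2) * Real.sin_sq_add_cos_sq a
    + (Real.sin a ^ 2 - 1 / 2) * Real.cosh_sq_sub_sinh_sq b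

lemma cot_add_mul_I_re (a b : ℝ) :
    (cot (a + b * I)).re = Real.sin (2 * a) / (Real.cosh (2 * b) - Real.cos (2 * a)) := by
  rw [cot_eq_cos_div_sin, div_re, normSq_sin_add_mul_I, sin_add_mul_I_ofReal,
    cos_add_mul_I_ofReal]
  simp only [add_re, sub_re, add_im, sub_im, mul_re, mul_im, ofReal_re, ofReal_im, I_re, I_im,
    div_div_eq_mul_div]
  rw [Real.sin_two_mul]
  linear_combination (2 * Real.sin a * Real.cos a / (Real.cosh (2 * b) - Real.cos (2 * a)))
    * Real.cosh_sq_sub_sinh_sq b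

lemma cot_add_mul_I_im (a b : ℝ) :
    (cot (a + b * I)).im = -Real.sinh (2 * b) / (Real.cosh (2 * b) - Real.cos (2 * a)) := by
  rw [cot_eq_cos_div_sin, div_im, normSq_sin_add_mul_I, sin_add_mul_I_ofReal,
    cos_add_mul_I_ofReal]
  simp only [add_re, sub_re, add_im, sub_im, mul_re, mul_im, ofReal_re, ofReal_im, I_re, I_im,
    div_div_eq_mul_div]
  rw [Real.sinh_two_mul]
  linear_combination (-2 * Real.sinh b * Real.cosh b / (Real.cosh (2 * b) - Real.cos (2 * a)))
    * Real.sin_sq_add_cos_sq a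

-- No hypothesis on `x`: on `L` both sides take the junk value of `x⁻¹` at `0`.
lemma Kinf_sub_K_eq (x : ℝ × ℝ) :
    Kinf x - K x = ((cot (π * (x.1 + x.2 * I)) - (π * (x.1 + x.2 * I))⁻¹).im / 2,
      (cot (π * (x.1 + x.2 * I)) - (π * (x.1 + x.2 * I))⁻¹).re / 2) := by
  have hz : (π : ℂ) * (x.1 + x.2 * I) = (π * x.1 : ℝ) + (π * x.2 : ℝ) * I := by push_cast; ring
  rw [hz]
  ext
  · simp only [Kinf, K, Prod.fst_sub, Prod.smul_fst, smul_eq_mul, sub_im, cot_add_mul_I_im,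
      inv_im, add_im, mul_im, ofReal_re, ofReal_im, I_re, I_im, normSq_add_mul_I]
    field_simp
    ring
  · simp only [Kinf, K, Prod.snd_sub, Prod.smul_snd, smul_eq_mul, sub_re, cot_add_mul_I_re,
      inv_re, add_re, mul_re, ofReal_re, ofReal_im, I_re, I_im, normSq_add_mul_I]
    field_simp
    ring

lemma sin_pi_mul_eq_zero_iff_mem_L (x : ℝ × ℝ) : sin (π * (x.1 + x.2 * I)) = 0 ↔ x ∈ L := by
  have hπ : (π : ℂ) ≠ 0 := ofReal_ne_zero.mpr Real.pi_ne_zero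
  simp only [sin_eq_zero_iff, L, Set.mem_ofPred_eq, Prod.ext_iff]
  refine exists_congr fun n => ?_
  rw [mul_comm _ (π : ℂ), mul_right_inj' hπ, Complex.ext_iff]
  simp

lemma dslope_sin_pi_mul_eq_zero_iff_mem_Lstar (x : ℝ × ℝ) :
    dslope sin 0 (π * (x.1 + x.2 * I)) = 0 ↔ x ∈ Lstar := by
  rw [dslope_sin_zero_eq_zero_iff, sin_pi_mul_eq_zero_iff_mem_L, Lstar, Set.mem_sdiff,
    Set.mem_singleton_iff, and_comm]
  refine and_congr_right' ?_
  simp [Prod.ext_iff, Complex.ext_iff, Real.pi_ne_zero]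

/-- `K_∞ - K` extends to a function `H` on `ℝ² \ L*` whose components are harmonic there. -/
theorem stmt9 : ∃ H : ℝ × ℝ → ℝ × ℝ,
    (∀ x : ℝ × ℝ, x ∉ L → H x = Kinf x - K x) ∧
    HarmonicOn (fun x => (H x).1) Lstarᶜ ∧
    HarmonicOn (fun x => (H x).2) Lstarᶜ := by
  let e : (ℝ × ℝ) ≃L[ℝ] ℂ := equivRealProdCLM.symm
  let F : ℂ → ℂ := fun z => cotSubInv (π * z) / 2
  let U : Set ℂ := {z | dslope sin 0 (π * z) ≠ 0}
  have hF : AnalyticOnNhd ℂ F U :=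
    ((differentiableOn_cotSubInv.comp (differentiable_id.const_mul _).differentiableOn
      fun _ hz => hz).div_const 2).analyticOnNhd
      (isOpen_dslope_sin_ne_zero.preimage (continuous_const.mul continuous_id))
  have hU : e ⁻¹' U = Lstarᶜ := by
    ext x
    simp [U, e, equivRealProdCLM_symm_apply, dslope_sin_pi_mul_eq_zero_iff_mem_Lstar]
  refine ⟨fun x => ((F (e x)).im, (F (e x)).re), fun x hx => ?_, ?_, ?_⟩
  · have hsin := (sin_pi_mul_eq_zero_iff_mem_L x).not.mpr hx
    simp [Kinf_sub_K_eq, F, e, equivRealProdCLM_symm_apply, cotSubInv_eq hsin]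
  · rw [← hU]
    exact HarmonicOn.of_harmonicOnNhd_comp_equivRealProd fun z hz => (hF z hz).harmonicAt_im
  · rw [← hU]
    exact HarmonicOn.of_harmonicOnNhd_comp_equivRealProd fun z hz => (hF z hz).harmonicAt_re
end
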